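/- arXiv:1211.1319 — 3 statements merged into one kernel-verified Lean document; each statement's English description precedes it below -/
import Mathlib

section
/- Let G be a finite simple undirected graph with m edges, let c : E → ℝ≥0 be a capacity function, let s, t be two vertices, let w ∈ ℝ, and suppose G itself admits an s-t flow of size at least w. Let 𝕊_w be the system of all orientations d of G such that G⃗^d admits an s-t flow of size at least w, and let e_w be the minimum number of edges of a subgraph G_X that admits an s-t flow of size at least w. Then dvc(𝕊_w) = vc(𝕊_w) = m − e_w. -/
/-- `𝕊` shatters `Y ⊆ X`: for every `f ∈ {0,1}^Y` there is `g ∈ {0,1}^{X−Y}` with `g⋆f ∈ S`;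
equivalently, every `f : α → Bool` agrees on `Y` with some member of `S`. -/
def Shatters {α : Type*} (S : Set (α → Bool)) (Y : Set α) : Prop :=
  ∀ f : α → Bool, ∃ h ∈ S, Set.EqOn h f Y

/-- `𝕊` strongly shatters `Y ⊆ X`: there is `g ∈ {0,1}^{X−Y}` such that for every
`f ∈ {0,1}^Y`, `g⋆f ∈ S` (here `g⋆f` is expressed as the member `h` of `S` agreeing
with `f` on `Y` and with `g` on `Yᶜ`). -/
def StronglyShatters {α : Type*} (S : Set (α → Bool)) (Y : Set α) : Prop :=
  ∃ g : α → Bool, ∀ f : α → Bool, ∃ h ∈ S, Set.EqOn h f Y ∧ Set.EqOn h g Yᶜ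

/-- The family of sets shattered by the system. -/
def str {α : Type*} (S : Set (α → Bool)) : Set (Set α) :=
  {Y | Shatters S Y}

/-- The family of sets strongly shattered by the system. -/
def sstr {α : Type*} (S : Set (α → Bool)) : Set (Set α) :=
  {Y | StronglyShatters S Y}


/-- The VC-dimension of a system: the maximum cardinality of a shattered set. -/
noncomputable def vcNat {α : Type*} (S : Set (α → Bool)) : ℕ :=
  sSup {n | ∃ Y : Set α, Shatters S Y ∧ Y.ncard = n}

/-- The dual VC-dimension of a system: the maximum cardinality of a strongly
shattered set. -/
noncomputable def dvcNat {α : Type*} (S : Set (α → Bool)) : ℕ :=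
  sSup {n | ∃ Y : Set α, StronglyShatters S Y ∧ Y.ncard = n}


/-- The arc relation of the digraph obtained by orienting the edges of `X ⊆ E(G)`
according to `d` (relative to the reference orientation `ρ`): `d e = false` keeps
the reference direction `(ρ e).1 → (ρ e).2`, `d e = true` reverses it. -/
def arcsOn {V : Type*} (G : SimpleGraph V) (ρ : Sym2 V → V × V)
    (X : Set G.edgeSet) (d : G.edgeSet → Bool) : V → V → Prop :=
  fun u v => ∃ e : G.edgeSet, e ∈ X ∧
    ((d e = false ∧ ρ e.val = (u, v)) ∨ (d e = true ∧ ρ e.val = (v, u)))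

/-- The arc relation of the digraph `G⃗^d` obtained by orienting all edges of `G`
according to `d`. -/
def arcs {V : Type*} (G : SimpleGraph V) (ρ : Sym2 V → V × V)
    (d : G.edgeSet → Bool) : V → V → Prop :=
  arcsOn G ρ Set.univ d

/-- A digraph contains a directed cycle iff some vertex lies on a closed directed
walk of positive length. -/
def HasDiCycle {V : Type*} (R : V → V → Prop) : Prop :=
  ∃ v, Relation.TransGen R v v

/-- The subgraph `G_X` of `G` on the full vertex set, with edge set `X ⊆ E(G)`. -/
def subgraphOf {V : Type*} (G : SimpleGraph V) (X : Set G.edgeSet) : SimpleGraph V :=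
  SimpleGraph.fromEdgeSet (Subtype.val '' X)


/-- The tail (source vertex) of the edge `e` oriented according to `d` (relative to the
reference orientation `ρ`). -/
def etail {V : Type*} {G : SimpleGraph V} (ρ : Sym2 V → V × V)
    (d : G.edgeSet → Bool) (e : G.edgeSet) : V :=
  if d e = false then (ρ e.val).1 else (ρ e.val).2

/-- The head (target vertex) of the edge `e` oriented according to `d`. -/
def ehead {V : Type*} {G : SimpleGraph V} (ρ : Sym2 V → V × V)
    (d : G.edgeSet → Bool) (e : G.edgeSet) : V :=
  if d e = false then (ρ e.val).2 else (ρ e.val).1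

open Classical in
/-- `φ` is an `s`-`t` flow of size `w` in the digraph obtained by orienting the edges of
`X ⊆ E(G)` according to `d`, with capacities `c`: it is supported on `X`, obeys the
capacity constraints, is conserved at every vertex other than `s` and `t`, and its net
outflow at `s` is `w`. -/
def IsFlowOn {V : Type*} (G : SimpleGraph V) [Fintype G.edgeSet]
    (ρ : Sym2 V → V × V) (c : Sym2 V → NNReal) (s t : V)
    (X : Set G.edgeSet) (d : G.edgeSet → Bool) (φ : G.edgeSet → ℝ) (w : ℝ) : Prop :=
  (∀ e, e ∉ X → φ e = 0) ∧
  (∀ e, 0 ≤ φ e ∧ φ e ≤ (c e.val : ℝ)) ∧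
  (∀ v : V, v ≠ s → v ≠ t →
    (∑ e : G.edgeSet, if e ∈ X ∧ ehead ρ d e = v then φ e else 0) =
      (∑ e : G.edgeSet, if e ∈ X ∧ etail ρ d e = v then φ e else 0)) ∧
  ((∑ e : G.edgeSet, if e ∈ X ∧ etail ρ d e = s then φ e else 0) -
    (∑ e : G.edgeSet, if e ∈ X ∧ ehead ρ d e = s then φ e else 0) = w)

/-- The digraph obtained by orienting the edges of `X ⊆ E(G)` according to `d` admits an
`s`-`t` flow of size at least `w`. -/
def AdmitsFlow {V : Type*} (G : SimpleGraph V) [Fintype G.edgeSet]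
    (ρ : Sym2 V → V × V) (c : Sym2 V → NNReal) (s t : V)
    (X : Set G.edgeSet) (d : G.edgeSet → Bool) (w : ℝ) : Prop :=
  ∃ (φ : G.edgeSet → ℝ) (w' : ℝ), w ≤ w' ∧ IsFlowOn G ρ c s t X d φ w'


/-! A shattered set `Y` can be deleted: the signed `s`-`t` flows of value at least `w` form a
convex set meeting every orthant of the coordinates in `Y`, so splitting one coordinate of `Y`
at a time and moving along a segment between a flow that is nonnegative and one that is
nonpositive there yields such a flow vanishing on all of `Y`; hence `e_w ≤ m - |Y|`.
Conversely, if a minimum subgraph `G_X` carries a flow under the orientation `d`, then every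
orientation agreeing with `d` on `X` carries it too, so `E - X` is strongly shattered. -/

def orient {α : Type*} (d : α → Bool) (φ : α → ℝ) : α → ℝ :=
  fun e => if d e then -φ e else φ e

lemma abs_orient {α : Type*} (d : α → Bool) (φ : α → ℝ) (e : α) :
    |orient d φ e| = |φ e| := by
  unfold orient; split_ifs <;> simp

lemma orient_decide_neg_abs {α : Type*} (ψ : α → ℝ) :
    orient (fun e => decide (ψ e < 0)) (fun e => |ψ e|) = ψ := by
  funext e
  by_cases h : ψ e < 0
  · simp [orient, h, abs_of_neg h]
  · simp [orient, h, abs_of_nonneg (not_lt.mp h)]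

lemma orient_orient_of_eq {α : Type*} {d d' : α → Bool} (φ : α → ℝ) {e : α}
    (h : d e = d' e) :
    orient d (orient d' φ) e = φ e := by
  cases hd : d' e <;> simp [orient, h, hd]

theorem Convex.exists_eqOn_zero_of_forall_orient_nonneg {α : Type*} {K : Set (α → ℝ)}
    (hK : Convex ℝ K) {Y : Set α} (hY : Y.Finite)
    (hK_orthants : ∀ σ : α → Bool, ∃ x ∈ K, ∀ e ∈ Y, 0 ≤ orient σ x e) :
    ∃ x ∈ K, Set.EqOn x 0 Y := by
  classical
  induction Y, hY using Set.Finite.induction_on generalizing K with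
  | empty =>
    obtain ⟨x, hx, -⟩ := hK_orthants fun _ => false
    exact ⟨x, hx, Set.eqOn_empty _ _⟩
  | @insert a Y haY _ ih =>
    have half (b : Bool) : ∃ x ∈ K, 0 ≤ orient (fun _ => b) x a ∧ Set.EqOn x 0 Y := by
      have hconv : Convex ℝ (K ∩ {x | 0 ≤ orient (fun _ => b) x a}) := by
        cases b
        · exact hK.inter (convex_halfSpace_ge (LinearMap.proj a).isLinear 0)
        · simpa [orient] using hK.inter (convex_halfSpace_le (LinearMap.proj a).isLinear 0)
      obtain ⟨x, ⟨hxK, hxa⟩, hxY⟩ := ih hconv fun σ => by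
        obtain ⟨x, hxK, hx⟩ := hK_orthants (Function.update σ a b)
        refine ⟨x, ⟨hxK, by simpa [orient] using hx a (Set.mem_insert a Y)⟩, fun e he => ?_⟩
        simpa [orient, Function.update_of_ne (ne_of_mem_of_not_mem he haY)] using
          hx e (Set.mem_insert_of_mem a he)
      exact ⟨x, hxK, hxa, hxY⟩
    obtain ⟨xp, hxpK, hxpa, hxpY⟩ := half false
    obtain ⟨xm, hxmK, hxma, hxmY⟩ := half true
    simp only [orient, if_false, if_true, Bool.false_eq_true, neg_nonneg] at hxpa hxma
    have hzero : Convex ℝ {x : α → ℝ | Set.EqOn x 0 Y} := fun x hx y hy p q _ _ _ e he => by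
      simp [hx he, hy he]
    -- The `a`-coordinates of the points of `K` vanishing on `Y` form an interval in `ℝ`.
    have hinterval : Set.Icc (xm a) (xp a) ⊆ LinearMap.proj a '' (K ∩ {x | Set.EqOn x 0 Y}) :=
      ((hK.inter hzero).linear_image (LinearMap.proj a)).ordConnected.out
        ⟨xm, ⟨hxmK, hxmY⟩, rfl⟩ ⟨xp, ⟨hxpK, hxpY⟩, rfl⟩
    obtain ⟨x, ⟨hxK, hxY⟩, hxa⟩ := hinterval ⟨hxma, hxpa⟩
    exact ⟨x, hxK, fun e he => (Set.mem_insert_iff.mp he).elim (· ▸ hxa) (hxY ·)⟩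

section Flows

open Classical

variable {V : Type*} (G : SimpleGraph V) [Fintype G.edgeSet] (ρ : Sym2 V → V × V)
  (c : Sym2 V → NNReal) (s t : V)

@[simps]
noncomputable def netOut (v : V) : (G.edgeSet → ℝ) →ₗ[ℝ] ℝ where
  toFun ψ :=
    ∑ e, ((if (ρ e.val).1 = v then 1 else 0) - if (ρ e.val).2 = v then 1 else 0) * ψ e
  map_add' ψ χ := by simp only [Pi.add_apply, mul_add, Finset.sum_add_distrib]
  map_smul' a ψ := by
    simp only [Pi.smul_apply, smul_eq_mul, Finset.mul_sum, RingHom.id_apply]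
    exact Finset.sum_congr rfl fun _ _ => mul_left_comm _ _ _

/-- A flow in which an edge may be used against the reference orientation, as negative flow. -/
def IsSignedFlow (ψ : G.edgeSet → ℝ) : Prop :=
  (∀ e, |ψ e| ≤ c e.val) ∧ ∀ v, v ≠ s → v ≠ t → netOut G ρ v ψ = 0

variable {G ρ c s t}

lemma convex_setOf_isSignedFlow (w : ℝ) :
    Convex ℝ {ψ | IsSignedFlow G ρ c s t ψ ∧ w ≤ netOut G ρ s ψ} := by
  refine Convex.inter ?_ (convex_halfSpace_ge (netOut G ρ s).isLinear w)
  rintro ψ ⟨hψc, hψv⟩ χ ⟨hχc, hχv⟩ a b ha hb hab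
  refine ⟨fun e => ?_, fun v hs ht => by
    simp only [map_add, map_smul, hψv v hs ht, hχv v hs ht, smul_zero, add_zero]⟩
  have hball := convex_closedBall (0 : ℝ) (c e.val)
    (x := ψ e) (y := χ e) (by simpa using hψc e) (by simpa using hχc e) ha hb hab
  simpa using hball

lemma netOut_orient {X : Set G.edgeSet} {d : G.edgeSet → Bool} {φ : G.edgeSet → ℝ}
    (hφX : ∀ e, e ∉ X → φ e = 0) (v : V) :
    netOut G ρ v (orient d φ) =
      (∑ e : G.edgeSet, if e ∈ X ∧ etail ρ d e = v then φ e else 0) -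
      (∑ e : G.edgeSet, if e ∈ X ∧ ehead ρ d e = v then φ e else 0) := by
  rw [netOut_apply, ← Finset.sum_sub_distrib]
  refine Finset.sum_congr rfl fun e _ => ?_
  by_cases he : e ∈ X
  · cases hd : d e <;> simp only [orient, etail, ehead, hd, he, true_and, if_true,
      if_false, Bool.false_eq_true] <;> split_ifs <;> simp_all
  · simp [orient, hφX e he, he]

lemma isFlowOn_iff {X : Set G.edgeSet} {d : G.edgeSet → Bool} {φ : G.edgeSet → ℝ} {w : ℝ} :
    IsFlowOn G ρ c s t X d φ w ↔
      (∀ e, e ∉ X → φ e = 0) ∧ (∀ e, 0 ≤ φ e ∧ φ e ≤ c e.val) ∧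
      (∀ v, v ≠ s → v ≠ t → netOut G ρ v (orient d φ) = 0) ∧
      netOut G ρ s (orient d φ) = w := by
  constructor
  · rintro ⟨hφX, hcap, hcons, hval⟩
    refine ⟨hφX, hcap, fun v hs ht => ?_, (netOut_orient hφX s).trans hval⟩
    rw [netOut_orient hφX, hcons v hs ht, sub_self]
  · rintro ⟨hφX, hcap, hcons, hval⟩
    refine ⟨hφX, hcap, fun v hs ht => ?_, (netOut_orient hφX s).symm.trans hval⟩
    exact (sub_eq_zero.mp ((netOut_orient hφX v).symm.trans (hcons v hs ht))).symm

lemma IsFlowOn.isSignedFlow_orient {X : Set G.edgeSet} {d : G.edgeSet → Bool}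
    {φ : G.edgeSet → ℝ} {w : ℝ} (h : IsFlowOn G ρ c s t X d φ w) :
    IsSignedFlow G ρ c s t (orient d φ) ∧ netOut G ρ s (orient d φ) = w := by
  obtain ⟨-, hcap, hcons, hval⟩ := isFlowOn_iff.mp h
  refine ⟨⟨fun e => ?_, hcons⟩, hval⟩
  rw [abs_orient, abs_of_nonneg (hcap e).1]
  exact (hcap e).2

lemma IsSignedFlow.isFlowOn_abs {X : Set G.edgeSet} {ψ : G.edgeSet → ℝ}
    (h : IsSignedFlow G ρ c s t ψ) (hψX : ∀ e, e ∉ X → ψ e = 0) :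
    IsFlowOn G ρ c s t X (fun e => decide (ψ e < 0)) (fun e => |ψ e|) (netOut G ρ s ψ) := by
  refine isFlowOn_iff.mpr ⟨fun e he => abs_eq_zero.mpr (hψX e he),
    fun e => ⟨abs_nonneg _, h.1 e⟩, ?_, ?_⟩ <;> rw [orient_decide_neg_abs]
  exact h.2

lemma IsFlowOn.univ_of_eqOn {X : Set G.edgeSet} {d d' : G.edgeSet → Bool}
    {φ : G.edgeSet → ℝ} {w : ℝ} (h : IsFlowOn G ρ c s t X d φ w) (hdd' : Set.EqOn d' d X) :
    IsFlowOn G ρ c s t Set.univ d' φ w := by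
  obtain ⟨hφX, hcap, hcons, hval⟩ := isFlowOn_iff.mp h
  have horient : orient d' φ = orient d φ := funext fun e => by
    by_cases he : e ∈ X
    · simp [orient, hdd' he]
    · simp [orient, hφX e he]
  exact isFlowOn_iff.mpr ⟨fun e he => absurd (Set.mem_univ e) he, hcap, horient ▸ hcons,
    horient ▸ hval⟩

lemma Shatters.exists_admitsFlow_compl {w : ℝ} {Y : Set G.edgeSet}
    (hY : Shatters {d | AdmitsFlow G ρ c s t Set.univ d w} Y) :
    ∃ d, AdmitsFlow G ρ c s t Yᶜ d w := by
  obtain ⟨ψ, ⟨hψ, hw⟩, hψY⟩ :=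
    (convex_setOf_isSignedFlow w).exists_eqOn_zero_of_forall_orient_nonneg Y.toFinite fun σ => by
      obtain ⟨d, ⟨φ, w', hw, hφ⟩, hdσ⟩ := hY σ
      obtain ⟨hsigned, hval⟩ := hφ.isSignedFlow_orient
      refine ⟨orient d φ, ⟨hsigned, hval ▸ hw⟩, fun e he => ?_⟩
      rw [orient_orient_of_eq φ (hdσ he).symm]
      exact ((isFlowOn_iff.mp hφ).2.1 e).1
  exact ⟨_, _, _, hw, hψ.isFlowOn_abs fun e he => hψY (Set.notMem_compl_iff.mp he)⟩

lemma AdmitsFlow.stronglyShatters_compl {w : ℝ} {X : Set G.edgeSet} {d : G.edgeSet → Bool}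
    (h : AdmitsFlow G ρ c s t X d w) :
    StronglyShatters {d | AdmitsFlow G ρ c s t Set.univ d w} Xᶜ := by
  obtain ⟨φ, w', hw, hφ⟩ := h
  refine ⟨d, fun f => ⟨X.piecewise d f, ?_, Set.piecewise_eqOn_compl X d f, ?_⟩⟩
  · exact ⟨φ, w', hw, hφ.univ_of_eqOn (Set.piecewise_eqOn X d f)⟩
  · rw [compl_compl]
    exact Set.piecewise_eqOn X d f

end Flows

lemma StronglyShatters.shatters {α : Type*} {S : Set (α → Bool)} {Y : Set α}
    (h : StronglyShatters S Y) : Shatters S Y := fun f =>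
  let ⟨_, hg⟩ := h
  (hg f).imp fun _ ⟨hS, hf, _⟩ => ⟨hS, hf⟩

lemma dvcNat_eq_and_vcNat_eq {α : Type*} {S : Set (α → Bool)} {n : ℕ}
    (hle : ∀ Y, Shatters S Y → Y.ncard ≤ n) {Y : Set α} (hY : StronglyShatters S Y)
    (hYn : Y.ncard = n) : dvcNat S = n ∧ vcNat S = n := by
  have hvc : ∀ k ∈ {k | ∃ Y : Set α, Shatters S Y ∧ Y.ncard = k}, k ≤ n := by
    rintro _ ⟨Y, hY, rfl⟩
    exact hle Y hY
  have hdvc : ∀ k ∈ {k | ∃ Y : Set α, StronglyShatters S Y ∧ Y.ncard = k}, k ≤ n := by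
    rintro _ ⟨Y, hY, rfl⟩
    exact hle Y hY.shatters
  exact ⟨le_antisymm (csSup_le' hdvc) (le_csSup ⟨n, hdvc⟩ ⟨Y, hY, hYn⟩),
    le_antisymm (csSup_le' hvc) (le_csSup ⟨n, hvc⟩ ⟨Y, hY.shatters, hYn⟩)⟩

theorem vc_dvc_flow_general {V : Type*} (G : SimpleGraph V) [Fintype G.edgeSet]
    (ρ : Sym2 V → V × V)
    (c : Sym2 V → NNReal) (s t : V) (w : ℝ) (m ew : ℕ)
    (hm : Nat.card G.edgeSet = m)
    (hew_mem : ∃ (X : Set G.edgeSet) (d : G.edgeSet → Bool),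
      AdmitsFlow G ρ c s t X d w ∧ X.ncard = ew)
    (hew_min : ∀ (X : Set G.edgeSet) (d : G.edgeSet → Bool),
      AdmitsFlow G ρ c s t X d w → ew ≤ X.ncard) :
    dvcNat {d : G.edgeSet → Bool | AdmitsFlow G ρ c s t Set.univ d w} = m - ew ∧
    vcNat {d : G.edgeSet → Bool | AdmitsFlow G ρ c s t Set.univ d w} = m - ew := by
  obtain ⟨X, d, hX, rfl⟩ := hew_mem
  refine dvcNat_eq_and_vcNat_eq (fun Y hY => ?_) hX.stronglyShatters_compl ?_
  · obtain ⟨d', hd'⟩ := hY.exists_admitsFlow_compl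
    have := hew_min _ _ hd'
    have := Set.ncard_add_ncard_compl Y
    omega
  · have := Set.ncard_add_ncard_compl X
    omega

/-- if `G` admits an `s`-`t` flow of size at least `w` and `e_w` is the
minimum number of edges of a subgraph admitting an `s`-`t` flow of size at least `w`,
then `dvc(𝕊_w) = vc(𝕊_w) = m − e_w` for the system `𝕊_w` of orientations of `G`
admitting an `s`-`t` flow of size at least `w`. -/
theorem vc_dvc_flow {V : Type*} [Fintype V] (G : SimpleGraph V) [Fintype G.edgeSet]
    (ρ : Sym2 V → V × V) (hρ : ∀ e ∈ G.edgeSet, Function.uncurry Sym2.mk (ρ e) = e)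
    (c : Sym2 V → NNReal) (s t : V) (w : ℝ) (m ew : ℕ)
    (hm : Nat.card G.edgeSet = m)
    (hG : ∃ d : G.edgeSet → Bool, AdmitsFlow G ρ c s t Set.univ d w)
    (hew_mem : ∃ (X : Set G.edgeSet) (d : G.edgeSet → Bool),
      AdmitsFlow G ρ c s t X d w ∧ X.ncard = ew)
    (hew_min : ∀ (X : Set G.edgeSet) (d : G.edgeSet → Bool),
      AdmitsFlow G ρ c s t X d w → ew ≤ X.ncard) :
    dvcNat {d : G.edgeSet → Bool | AdmitsFlow G ρ c s t Set.univ d w} = m - ew ∧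
    vcNat {d : G.edgeSet → Bool | AdmitsFlow G ρ c s t Set.univ d w} = m - ew :=
  vc_dvc_flow_general G ρ c s t w m ew hm hew_mem hew_min
end

section
/- Let G be a finite simple undirected graph with edge set E, let w : E → ℝ≥0 be a length function, let s, t be two vertices of G, and let d ∈ ℝ. Then the number of orientations f of G such that the digraph G⃗^f contains a directed path from s to t of total length at most d equals the number of edge subsets X ⊆ E such that G_X contains a path from s to t of total length at most d. -/
/-- The list of consecutive arcs of the walk `u, p₀, p₁, …`. -/
def diArcsOf {V : Type*} (u : V) (p : List V) : List (V × V) :=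
  (u :: p).zip p

/-- `u, p₀, p₁, …` is a directed path from `u` to `v` in the digraph `R`: consecutive
vertices are joined by arcs, the last vertex is `v`, and no vertex repeats. -/
def IsDiPath {V : Type*} (R : V → V → Prop) (u v : V) (p : List V) : Prop :=
  List.Chain R u p ∧ (u :: p).getLast (List.cons_ne_nil u p) = v ∧ (u :: p).Nodup


/-!
Replace the source `s` by a potential `δ : V → ℝ≥0∞`, where starting a walk at `u` costs
`δ u`, and count the orientations, resp. edge subsets, in which `t` is reached within a
budget `B`. Let `e = uv` be an edge whose endpoint `u` has least potential among all
endpoints. Every walk starts at potential at least `δ u`, so no walk gains from entering `u`: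
the arc `v → u` can be deleted, and so can the arc `u → v` once `δ v` is relaxed to
`min (δ v) (δ u + w e)`, as in Dijkstra's algorithm. So for orientations as for edge subsets,
twice the count for `G` and `δ` is the count for `G - e` and `δ` plus the count for `G - e`
and the relaxed potential, and induction on the number of edges concludes.
-/

open scoped ENNReal

namespace EdgeOrientation

variable {V : Type*}

section Walks

variable (c : V × V → ℝ≥0∞)

def walkCost (l : List V) : ℝ≥0∞ := ((l.zip l.tail).map c).sum

@[simp] lemma walkCost_cons_cons (u v : V) (l : List V) :
    walkCost c (u :: v :: l) = c (u, v) + walkCost c (v :: l) := rfl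

lemma walkCost_le_cons (u : V) (l : List V) : walkCost c l ≤ walkCost c (u :: l) := by
  cases l with
  | nil => simp [walkCost]
  | cons v l => simp

lemma walkCost_le_of_suffix {l₁ l₂ : List V} (h : l₁ <:+ l₂) :
    walkCost c l₁ ≤ walkCost c l₂ := by
  obtain ⟨l, rfl⟩ := h
  induction l with
  | nil => rfl
  | cons u l ih => exact ih.trans (walkCost_le_cons c u _)

lemma exists_nodup_of_isChain {R : V → V → Prop} :
    ∀ (x : V) (p : List V), (x :: p).IsChain R → ∃ q, (x :: q).IsChain R ∧
      (x :: q).getLast (List.cons_ne_nil x q) = (x :: p).getLast (List.cons_ne_nil x p) ∧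
      (x :: q).Nodup ∧ walkCost c (x :: q) ≤ walkCost c (x :: p)
  | x, [], _ => ⟨[], .singleton x, rfl, List.nodup_singleton x, le_rfl⟩
  | x, a :: p, hp => by
    rw [List.isChain_cons_cons] at hp
    obtain ⟨q, hq, hlast, hnodup, hcost⟩ := exists_nodup_of_isChain a p hp.2
    by_cases hx : x ∈ a :: q
    · obtain ⟨l₁, l₂, hsplit⟩ := List.append_of_mem hx
      have hsuffix : x :: l₂ <:+ a :: q := hsplit ▸ List.suffix_append l₁ _
      refine ⟨l₂, hq.suffix hsuffix, ?_, hnodup.sublist hsuffix.sublist, ?_⟩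
      · rw [hsuffix.getLast, hlast, List.getLast_cons_cons]
      · calc walkCost c (x :: l₂) ≤ walkCost c (a :: q) := walkCost_le_of_suffix c hsuffix
          _ ≤ walkCost c (a :: p) := hcost
          _ ≤ walkCost c (x :: a :: p) := walkCost_le_cons c x _
    · refine ⟨a :: q, .cons_cons hp.1 hq, by simpa using hlast,
        List.nodup_cons.mpr ⟨hx, hnodup⟩, ?_⟩
      simp only [walkCost_cons_cons]
      gcongr

def ReachableWithin (R : V → V → Prop) (δ : V → ℝ≥0∞) (B : ℝ≥0∞) (t : V) :
    Prop :=
  ∃ u p, (u :: p).IsChain R ∧ (u :: p).getLast (List.cons_ne_nil u p) = t ∧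
    δ u + walkCost c (u :: p) ≤ B

def relax [DecidableEq V] (δ : V → ℝ≥0∞) (u v : V) : V → ℝ≥0∞ :=
  Function.update δ v (min (δ v) (δ u + c (u, v)))

variable {c} {R R' : V → V → Prop} {δ δ' : V → ℝ≥0∞} {B : ℝ≥0∞} {t : V}

lemma relax_le [DecidableEq V] (u v x : V) : relax c δ u v x ≤ δ x := by
  unfold relax
  rcases eq_or_ne x v with rfl | hx
  · simp
  · simp [hx]

lemma ReachableWithin.mono (hR : ∀ a b, R a b → R' a b) (hδ : ∀ x, δ' x ≤ δ x)
    (h : ReachableWithin c R δ B t) : ReachableWithin c R' δ' B t := by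
  obtain ⟨u, p, hp, hlast, hcost⟩ := h
  exact ⟨u, p, hp.imp hR, hlast, le_trans (by gcongr; exact hδ u) hcost⟩

lemma ReachableWithin.of_relax [DecidableEq V] {u v : V} (huv : R u v)
    (h : ReachableWithin c R (relax c δ u v) B t) : ReachableWithin c R δ B t := by
  obtain ⟨x, p, hp, hlast, hcost⟩ := h
  rcases eq_or_ne x v with rfl | hx
  · rcases min_choice (δ x) (δ u + c (u, x)) with hmin | hmin <;>
      simp only [relax, Function.update_self, hmin] at hcost
    · exact ⟨x, p, hp, hlast, hcost⟩
    · refine ⟨u, x :: p, .cons_cons huv hp, by simpa using hlast, ?_⟩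
      rwa [walkCost_cons_cons, ← add_assoc]
  · exact ⟨x, p, hp, hlast, by simpa [relax, hx] using hcost⟩

/-- `y :: q` is the part of the walk after its last step outside `R'`. -/
lemma isChain_or_exists_restart {m : ℝ≥0∞}
    (hR : ∀ a b, R a b → R' a b ∨ δ' b ≤ m + c (a, b)) :
    ∀ (x : V) (p : List V), (x :: p).IsChain R →
      (x :: p).IsChain R' ∨ ∃ y q, (y :: q).IsChain R' ∧
        (y :: q).getLast (List.cons_ne_nil y q) = (x :: p).getLast (List.cons_ne_nil x p) ∧
        δ' y + walkCost c (y :: q) ≤ m + walkCost c (x :: p)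
  | _, [], _ => Or.inl (.singleton _)
  | x, a :: p, hp => by
    rw [List.isChain_cons_cons] at hp
    have hcost : walkCost c (a :: p) ≤ walkCost c (x :: a :: p) := walkCost_le_cons c x _
    rcases isChain_or_exists_restart hR a p hp.2 with hp' | ⟨y, q, hq, hlast, hyq⟩
    · rcases hR x a hp.1 with hxa | hxa
      · exact Or.inl (.cons_cons hxa hp')
      · refine Or.inr ⟨a, p, hp', by simp, ?_⟩
        rw [walkCost_cons_cons, ← add_assoc]
        gcongr
    · exact Or.inr ⟨y, q, hq, by simpa using hlast, hyq.trans (by gcongr)⟩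

lemma ReachableWithin.of_restart {m : ℝ≥0∞} (hm : ∀ a b, R a b → m ≤ δ a)
    (hδ : ∀ x, δ' x ≤ δ x) (hR : ∀ a b, R a b → R' a b ∨ δ' b ≤ m + c (a, b))
    (h : ReachableWithin c R δ B t) : ReachableWithin c R' δ' B t := by
  obtain ⟨x, p, hp, hlast, hcost⟩ := h
  rcases isChain_or_exists_restart hR x p hp with hp' | ⟨y, q, hq, hylast, hyq⟩
  · exact ⟨x, p, hp', hlast, le_trans (by gcongr; exact hδ x) hcost⟩
  · cases p with
    | nil => exact ⟨x, [], .singleton x, hlast, le_trans (by gcongr; exact hδ x) hcost⟩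
    | cons a p =>
      have hmx : m ≤ δ x := hm x a (List.isChain_cons_cons.mp hp).1
      exact ⟨y, q, hq, hylast.trans hlast, hyq.trans (le_trans (by gcongr) hcost)⟩

end Walks

section EdgeRel

variable {ι : Type*}

def orient (p : V × V) (b : Bool) : V × V := bif b then p.swap else p

@[simp] lemma orient_false (p : V × V) : orient p false = p := rfl

@[simp] lemma orient_true (p : V × V) : orient p true = p.swap := rfl

lemma orient_not (p : V × V) (b : Bool) : orient p (!b) = (orient p b).swap := by
  cases b <;> rfl

lemma range_orient {p : V × V} {b : Bool} {u v : V} (h : orient p b = (u, v)) :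
    Set.range (orient p) = {(u, v), (v, u)} := by
  have h' : orient p (!b) = (v, u) := by rw [orient_not, h]; rfl
  ext q
  constructor
  · rintro ⟨r, rfl⟩
    rcases Bool.eq_or_eq_not r b with rfl | rfl <;> simp [h, h']
  · rintro (rfl | rfl)
    exacts [⟨b, h⟩, ⟨!b, h'⟩]

lemma mem_range_orient_iff {p q : V × V} :
    q ∈ Set.range (orient p) ↔ Sym2.mk.uncurry p = Sym2.mk.uncurry q := by
  constructor
  · rintro ⟨r, rfl⟩
    cases r
    · rfl
    · exact Sym2.eq_swap
  · intro h
    rcases Sym2.mk_eq_mk_iff.mp h with rfl | rfl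
    exacts [⟨false, rfl⟩, ⟨true, rfl⟩]

def edgeRel (S : Finset ι) (A : ι → Set (V × V)) (a b : V) : Prop :=
  ∃ i ∈ S, (a, b) ∈ A i

def orientArcs (ends : ι → V × V) (f : ι → Bool) (i : ι) : Set (V × V) :=
  {orient (ends i) (f i)}

def subgraphArcs (ends : ι → V × V) (g : ι → Bool) (i : ι) : Set (V × V) :=
  if g i then Set.range (orient (ends i)) else ∅

variable {S : Finset ι} {A : ι → Set (V × V)}

@[simp] lemma edgeRel_empty : edgeRel (∅ : Finset ι) A = fun _ _ => False := by
  funext a b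
  simp [edgeRel]

lemma edgeRel_mono {S' : Finset ι} (h : S' ⊆ S) {a b : V} (hab : edgeRel S' A a b) :
    edgeRel S A a b :=
  let ⟨i, hi, hab⟩ := hab; ⟨i, h hi, hab⟩

lemma edgeRel_erase_or [DecidableEq ι] {e : ι} {a b : V} (hab : edgeRel S A a b) :
    edgeRel (S.erase e) A a b ∨ (a, b) ∈ A e := by
  obtain ⟨i, hi, hab⟩ := hab
  rcases eq_or_ne i e with rfl | hie
  · exact Or.inr hab
  · exact Or.inl ⟨i, Finset.mem_erase.mpr ⟨hie, hi⟩, hab⟩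

lemma edgeRel_update_of_notMem [DecidableEq ι] {Φ : ι → Bool → Set (V × V)} {e : ι}
    (he : e ∉ S) (f : ι → Bool) (b : Bool) :
    edgeRel S (fun i => Φ i (Function.update f e b i)) = edgeRel S (fun i => Φ i (f i)) := by
  ext a b'
  refine exists_congr fun i => and_congr_right fun hi => ?_
  dsimp only
  rw [Function.update_of_ne (ne_of_mem_of_not_mem hi he)]

lemma edgeRel_orientArcs_update [DecidableEq ι] {ends : ι → V × V} {e : ι} (he : e ∉ S)
    (f : ι → Bool) (b : Bool) :
    edgeRel S (orientArcs ends (Function.update f e b)) = edgeRel S (orientArcs ends f) :=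
  edgeRel_update_of_notMem (Φ := fun i x => {orient (ends i) x}) he f b

lemma edgeRel_subgraphArcs_update [DecidableEq ι] {ends : ι → V × V} {e : ι} (he : e ∉ S)
    (g : ι → Bool) (b : Bool) :
    edgeRel S (subgraphArcs ends (Function.update g e b)) = edgeRel S (subgraphArcs ends g) :=
  edgeRel_update_of_notMem (Φ := fun i x => if x then Set.range (orient (ends i)) else ∅) he g b

variable {c : V × V → ℝ≥0∞} {δ : V → ℝ≥0∞} {B : ℝ≥0∞} {t u v : V} {e : ι}

lemma reachableWithin_edgeRel_iff_relax [DecidableEq V] [DecidableEq ι] (he : e ∈ S)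
    (huv : (u, v) ∈ A e) (hA : A e ⊆ {(u, v), (v, u)})
    (hm : ∀ i ∈ S, ∀ p ∈ A i, δ u ≤ δ p.1) :
    ReachableWithin c (edgeRel S A) δ B t ↔
      ReachableWithin c (edgeRel (S.erase e) A) (relax c δ u v) B t := by
  refine ⟨ReachableWithin.of_restart (m := δ u) (fun a b ⟨i, hi, hab⟩ => hm i hi _ hab)
    (relax_le u v) fun a b hab => ?_, fun h => (h.mono (fun a b => edgeRel_mono
      (S.erase_subset e)) fun _ => le_rfl).of_relax ⟨e, he, huv⟩⟩
  refine (edgeRel_erase_or hab).imp_right fun hab => ?_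
  obtain ⟨rfl, rfl⟩ | ⟨rfl, rfl⟩ : (a = u ∧ b = v) ∨ (a = v ∧ b = u) := by
    simpa using hA hab
  · simp [relax]
  · exact (relax_le _ _ _).trans le_self_add

lemma reachableWithin_edgeRel_iff_erase [DecidableEq ι] (hA : A e ⊆ {(v, u)})
    (hm : ∀ i ∈ S, ∀ p ∈ A i, δ u ≤ δ p.1) :
    ReachableWithin c (edgeRel S A) δ B t ↔
      ReachableWithin c (edgeRel (S.erase e) A) δ B t := by
  refine ⟨ReachableWithin.of_restart (m := δ u) (fun a b ⟨i, hi, hab⟩ => hm i hi _ hab)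
    (fun _ => le_rfl) fun a b hab => ?_, ReachableWithin.mono
      (fun a b => edgeRel_mono (S.erase_subset e)) fun _ => le_rfl⟩
  refine (edgeRel_erase_or hab).imp_right fun hab => ?_
  obtain ⟨rfl, rfl⟩ : a = v ∧ b = u := by simpa using hA hab
  exact le_self_add

variable [DecidableEq V] [DecidableEq ι] {ends : ι → V × V} {b₀ : Bool}

lemma reachableWithin_orientArcs_iff (he : e ∈ S) (huv : orient (ends e) b₀ = (u, v))
    (hm : ∀ i ∈ S, ∀ r, δ u ≤ δ (orient (ends i) r).1) (f : ι → Bool) :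
    ReachableWithin c (edgeRel S (orientArcs ends f)) δ B t ↔
      if f e = b₀ then ReachableWithin c (edgeRel (S.erase e) (orientArcs ends f))
        (relax c δ u v) B t
      else ReachableWithin c (edgeRel (S.erase e) (orientArcs ends f)) δ B t := by
  have hm' : ∀ i ∈ S, ∀ p ∈ orientArcs ends f i, δ u ≤ δ p.1 := by
    rintro i hi _ rfl
    exact hm i hi (f i)
  split_ifs with hf
  · exact reachableWithin_edgeRel_iff_relax he (by simp [orientArcs, hf, huv])
      (by simp [orientArcs, hf, huv]) hm'
  · replace hf : f e = !b₀ := Bool.eq_not_iff.mpr hf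
    have hvu : orient (ends e) (f e) = (v, u) := by rw [hf, orient_not, huv]; rfl
    exact reachableWithin_edgeRel_iff_erase (u := u) (v := v) (by simp [orientArcs, hvu]) hm'

lemma reachableWithin_subgraphArcs_iff (he : e ∈ S) (huv : orient (ends e) b₀ = (u, v))
    (hm : ∀ i ∈ S, ∀ r, δ u ≤ δ (orient (ends i) r).1) (g : ι → Bool) :
    ReachableWithin c (edgeRel S (subgraphArcs ends g)) δ B t ↔
      if g e then ReachableWithin c (edgeRel (S.erase e) (subgraphArcs ends g))
        (relax c δ u v) B t
      else ReachableWithin c (edgeRel (S.erase e) (subgraphArcs ends g)) δ B t := by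
  have hm' : ∀ i ∈ S, ∀ p ∈ subgraphArcs ends g i, δ u ≤ δ p.1 := by
    intro i hi p hp
    unfold subgraphArcs at hp
    split_ifs at hp
    · obtain ⟨r, rfl⟩ := hp
      exact hm i hi r
    · exact hp.elim
  split_ifs with hg
  · exact reachableWithin_edgeRel_iff_relax he (by simp [subgraphArcs, hg, range_orient huv])
      (by simp [subgraphArcs, hg, range_orient huv]) hm'
  · exact reachableWithin_edgeRel_iff_erase (u := u) (v := v) (by simp [subgraphArcs, hg]) hm'

end EdgeRel

section Counting

variable {ι : Type*} [Finite ι] (P : (ι → Bool) → Prop) (e : ι)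

lemma ncard_eq_ncard_and_add_ncard_and (b : Bool) :
    {f | P f}.ncard = {f | P f ∧ f e = b}.ncard + {f | P f ∧ f e = !b}.ncard := by
  rw [← Set.ncard_inter_add_ncard_sdiff_eq_ncard {f | P f} {f | f e = b} (Set.toFinite _)]
  congr 2
  ext f
  simp [Bool.eq_not_iff]

variable [DecidableEq ι]

lemma two_mul_ncard_and_eq (hP : ∀ f b, P (Function.update f e b) ↔ P f) (b : Bool) :
    2 * {f | P f ∧ f e = b}.ncard = {f | P f}.ncard := by
  set flip : (ι → Bool) → ι → Bool := fun f => Function.update f e (!f e)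
  have hflip : Function.Involutive flip := fun f => by simp [flip]
  have hpre : flip ⁻¹' {f | P f ∧ f e = b} = {f | P f ∧ f e = !b} := by
    ext f
    simp [flip, hP, Bool.not_eq_eq_eq_not]
  rw [ncard_eq_ncard_and_add_ncard_and P e b, two_mul, ← hpre,
    Set.ncard_preimage_of_injective_subset_range hflip.injective
      (hflip.surjective.range_eq ▸ Set.subset_univ _)]

lemma two_mul_ncard_eq_add {P₀ P₁ : (ι → Bool) → Prop}
    (hP₀ : ∀ f b, P₀ (Function.update f e b) ↔ P₀ f)
    (hP₁ : ∀ f b, P₁ (Function.update f e b) ↔ P₁ f) (b : Bool)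
    (hP : ∀ f, P f ↔ if f e = b then P₀ f else P₁ f) :
    2 * {f | P f}.ncard = {f | P₀ f}.ncard + {f | P₁ f}.ncard := by
  have h₀ : {f | P f ∧ f e = b} = {f | P₀ f ∧ f e = b} := by
    ext f; by_cases hf : f e = b <;> simp [hP, hf]
  have h₁ : {f | P f ∧ f e = !b} = {f | P₁ f ∧ f e = !b} := by
    ext f; by_cases hf : f e = b <;> simp [hP, hf, Bool.eq_not_iff]
  rw [ncard_eq_ncard_and_add_ncard_and P e b, mul_add, h₀, h₁,
    two_mul_ncard_and_eq P₀ e hP₀, two_mul_ncard_and_eq P₁ e hP₁]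

end Counting

theorem ncard_reachableWithin_orientArcs_eq {ι : Type*} [Finite ι] [DecidableEq ι]
    [DecidableEq V] (ends : ι → V × V) (c : V × V → ℝ≥0∞) (B : ℝ≥0∞) (t : V)
    (S : Finset ι) (δ : V → ℝ≥0∞) :
    {f | ReachableWithin c (edgeRel S (orientArcs ends f)) δ B t}.ncard =
      {g | ReachableWithin c (edgeRel S (subgraphArcs ends g)) δ B t}.ncard := by
  induction S using Finset.strongInduction generalizing δ with | H S ih
  rcases S.eq_empty_or_nonempty with rfl | hS
  · simp
  -- `e` oriented by `b₀` leaves an endpoint of least potential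
  obtain ⟨⟨e, b₀⟩, he, hmin⟩ := (S ×ˢ Finset.univ).exists_min_image
    (fun q => δ (orient (ends q.1) q.2).1) (hS.product Finset.univ_nonempty)
  replace he : e ∈ S := (Finset.mem_product.mp he).1
  have hm : ∀ i ∈ S, ∀ r, δ (orient (ends e) b₀).1 ≤ δ (orient (ends i) r).1 :=
    fun i hi r => hmin (i, r) (Finset.mem_product.mpr ⟨hi, Finset.mem_univ r⟩)
  have he' : e ∉ S.erase e := S.notMem_erase e
  have two_orient :=
    two_mul_ncard_eq_add (fun f => ReachableWithin c (edgeRel S (orientArcs ends f)) δ B t) e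
      (fun _ _ => by rw [edgeRel_orientArcs_update he'])
      (fun _ _ => by rw [edgeRel_orientArcs_update he']) b₀
      (reachableWithin_orientArcs_iff he rfl hm)
  have two_subgraph :=
    two_mul_ncard_eq_add (fun g => ReachableWithin c (edgeRel S (subgraphArcs ends g)) δ B t) e
      (fun _ _ => by rw [edgeRel_subgraphArcs_update he'])
      (fun _ _ => by rw [edgeRel_subgraphArcs_update he']) true
      (reachableWithin_subgraphArcs_iff he rfl hm)
  rw [ih _ (S.erase_ssubset he), ih _ (S.erase_ssubset he)] at two_orient
  omega

section Graphs

lemma list_sum_coe_le_iff {α : Type*} (l : List α) (w : α → NNReal) (d : ℝ) :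
    (l.map fun x => (w x : ℝ)).sum ≤ d ↔
      0 ≤ d ∧ (l.map fun x => (w x : ℝ≥0∞)).sum ≤ ENNReal.ofReal d := by
  have hcoe : (l.map fun x => (w x : ℝ)).sum = ((l.map w).sum : ℝ) ∧
      (l.map fun x => (w x : ℝ≥0∞)).sum = ((l.map w).sum : ℝ≥0∞) := by
    induction l with
    | nil => simp
    | cons x l ih => simp [ih.1, ih.2]
  rw [hcoe.1, hcoe.2]
  refine ⟨fun h => ⟨(l.map w).sum.coe_nonneg.trans h, ?_⟩, fun ⟨hd, h⟩ => ?_⟩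
  · rwa [ENNReal.ofReal, ENNReal.coe_le_coe,
      Real.le_toNNReal_iff_coe_le ((l.map w).sum.coe_nonneg.trans h)]
  · rwa [ENNReal.ofReal, ENNReal.coe_le_coe, Real.le_toNNReal_iff_coe_le hd] at h

variable {c : V × V → ℝ≥0∞} {R : V → V → Prop} {B : ℝ≥0∞} {s t : V}

lemma exists_isDiPath_iff_exists_isChain :
    (∃ p, IsDiPath R s t p ∧ walkCost c (s :: p) ≤ B) ↔
      ∃ p, (s :: p).IsChain R ∧ (s :: p).getLast (List.cons_ne_nil s p) = t ∧
        walkCost c (s :: p) ≤ B := by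
  refine ⟨fun ⟨p, ⟨hp, hlast, _⟩, hcost⟩ => ⟨p, hp, hlast, hcost⟩,
    fun ⟨p, hp, hlast, hcost⟩ => ?_⟩
  obtain ⟨q, hq, hqlast, hnodup, hqcost⟩ := exists_nodup_of_isChain c s p hp
  exact ⟨q, ⟨hq, hqlast.trans hlast, hnodup⟩, hqcost.trans hcost⟩

def sourcePotential [DecidableEq V] (s : V) : V → ℝ≥0∞ := fun x => if x = s then 0 else ⊤

lemma reachableWithin_sourcePotential_iff [DecidableEq V] (hB : B ≠ ⊤) :
    ReachableWithin c R (sourcePotential s) B t ↔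
      ∃ p, (s :: p).IsChain R ∧ (s :: p).getLast (List.cons_ne_nil s p) = t ∧
        walkCost c (s :: p) ≤ B := by
  refine ⟨fun ⟨u, p, hp, hlast, hcost⟩ => ?_, fun ⟨p, hp, hlast, hcost⟩ =>
    ⟨s, p, hp, hlast, by simpa [sourcePotential] using hcost⟩⟩
  obtain rfl : u = s := by
    by_contra hu
    simp [sourcePotential, hu, hB] at hcost
  exact ⟨p, hp, hlast, by simpa [sourcePotential] using hcost⟩

lemma walkCost_support {H : SimpleGraph V} (w : Sym2 V → ℝ≥0∞) (q : H.Walk s t) :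
    walkCost (fun a => w (Sym2.mk.uncurry a)) q.support = (q.edges.map w).sum := by
  rw [SimpleGraph.Walk.edges_eq_zipWith_support, ← List.map_uncurry_zip_eq_zipWith,
    List.map_map]
  rfl

lemma exists_isPath_iff_exists_isChain [DecidableEq V] {H : SimpleGraph V}
    (w : Sym2 V → ℝ≥0∞) :
    (∃ q : H.Walk s t, q.IsPath ∧ (q.edges.map w).sum ≤ B) ↔
      ∃ p, (s :: p).IsChain H.Adj ∧ (s :: p).getLast (List.cons_ne_nil s p) = t ∧
        walkCost (fun a => w (Sym2.mk.uncurry a)) (s :: p) ≤ B := by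
  constructor
  · rintro ⟨q, -, hcost⟩
    have hsupp := q.cons_tail_support.symm
    refine ⟨q.support.tail, hsupp ▸ q.isChain_adj_support, ?_, ?_⟩
    · simp_rw [← hsupp]
      exact q.getLast_support
    · rwa [← hsupp, walkCost_support]
  · rintro ⟨p, hp, hlast, hcost⟩
    let q : H.Walk s t :=
      (SimpleGraph.Walk.ofSupport (s :: p) (List.cons_ne_nil s p) hp).copy rfl hlast
    obtain ⟨l, hperm, hsublist⟩ :=
      q.bypass_isPath.edges_nodup.subperm q.edges_bypass_subset_edges
    refine ⟨q.bypass, q.bypass_isPath, ?_⟩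
    rw [← (hperm.map w).sum_eq]
    refine ((hsublist.map w).sum_le_sum fun _ _ => zero_le).trans ?_
    rwa [← walkCost_support, show q.support = s :: p from
      (SimpleGraph.Walk.support_copy _ _ _).trans (SimpleGraph.Walk.support_ofSupport _ _)]

lemma arcs_eq (G : SimpleGraph V) [Fintype G.edgeSet] (ρ : Sym2 V → V × V)
    (f : G.edgeSet → Bool) :
    arcs G ρ f = edgeRel Finset.univ (orientArcs (fun e => ρ e.val) f) := by
  funext a b
  refine propext (exists_congr fun e => ?_)
  cases hfe : f e <;> simp [orientArcs, hfe, eq_comm, Prod.ext_iff, and_comm]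

lemma subgraphOf_adj_eq {G : SimpleGraph V} [Fintype G.edgeSet] {ρ : Sym2 V → V × V}
    (hρ : ∀ e ∈ G.edgeSet, Sym2.mk.uncurry (ρ e) = e) (g : G.edgeSet → Bool) :
    (subgraphOf G {e | g e = true}).Adj =
      edgeRel Finset.univ (subgraphArcs (fun e => ρ e.val) g) := by
  funext a b
  simp only [subgraphOf, SimpleGraph.fromEdgeSet_adj, edgeRel, subgraphArcs, Finset.mem_univ,
    true_and, Set.mem_image, Set.mem_ofPred_eq, eq_iff_iff]
  constructor
  · rintro ⟨⟨e, hge, hab⟩, -⟩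
    exact ⟨e, by rw [if_pos hge, mem_range_orient_iff, hρ e e.2, hab]; rfl⟩
  · rintro ⟨e, hab⟩
    split_ifs at hab with hge
    · rw [mem_range_orient_iff, hρ e e.2] at hab
      have hadj : Sym2.mk.uncurry (a, b) ∈ G.edgeSet := hab ▸ e.2
      exact ⟨⟨e, hge, hab⟩, G.ne_of_adj (G.mem_edgeSet.mp hadj)⟩
    · exact hab.elim

lemma ncard_boolFun_eq_ncard_set {ι : Type*} (Q : Set ι → Prop) :
    {g : ι → Bool | Q {i | g i = true}}.ncard = {X : Set ι | Q X}.ncard := by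
  have hinj : Function.Injective fun (g : ι → Bool) => {i | g i = true} := fun g g' h =>
    funext fun i => Bool.eq_iff_iff.mpr (Set.ext_iff.mp h i)
  have hsurj : Function.Surjective fun (g : ι → Bool) => {i | g i = true} := fun X =>
    ⟨X.boolIndicator, X.preimage_boolIndicator_true⟩
  exact Set.ncard_preimage_of_injective_subset_range hinj (hsurj.range_eq ▸ Set.subset_univ _)

variable [DecidableEq V] {G : SimpleGraph V} [Fintype G.edgeSet] {ρ : Sym2 V → V × V}
  {w : Sym2 V → NNReal} {d : ℝ}

lemma exists_isDiPath_iff_reachableWithin (f : G.edgeSet → Bool) :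
    (∃ p : List V, IsDiPath (arcs G ρ f) s t p ∧
        ((diArcsOf s p).map fun a => (w (Sym2.mk.uncurry a) : ℝ)).sum ≤ d) ↔
      0 ≤ d ∧ ReachableWithin (fun a => w (Sym2.mk.uncurry a))
        (edgeRel Finset.univ (orientArcs (fun e => ρ e.val) f)) (sourcePotential s)
        (ENNReal.ofReal d) t := by
  rw [reachableWithin_sourcePotential_iff ENNReal.ofReal_ne_top,
    ← exists_isDiPath_iff_exists_isChain, arcs_eq]
  simp only [list_sum_coe_le_iff]
  exact ⟨fun ⟨p, hp, hd, h⟩ => ⟨hd, p, hp, h⟩,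
    fun ⟨hd, p, hp, h⟩ => ⟨p, hp, hd, h⟩⟩

lemma exists_isPath_iff_reachableWithin (hρ : ∀ e ∈ G.edgeSet, Sym2.mk.uncurry (ρ e) = e)
    (g : G.edgeSet → Bool) :
    (∃ q : (subgraphOf G {e | g e = true}).Walk s t, q.IsPath ∧
        (q.edges.map fun e => (w e : ℝ)).sum ≤ d) ↔
      0 ≤ d ∧ ReachableWithin (fun a => w (Sym2.mk.uncurry a))
        (edgeRel Finset.univ (subgraphArcs (fun e => ρ e.val) g)) (sourcePotential s)
        (ENNReal.ofReal d) t := by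
  rw [reachableWithin_sourcePotential_iff ENNReal.ofReal_ne_top, ← subgraphOf_adj_eq hρ]
  simp only [list_sum_coe_le_iff]
  exact ⟨fun ⟨q, hq, hd, h⟩ =>
      ⟨hd, (exists_isPath_iff_exists_isChain _).mp ⟨q, hq, h⟩⟩,
    fun ⟨hd, h⟩ =>
      let ⟨q, hq, h⟩ := (exists_isPath_iff_exists_isChain _).mpr h
      ⟨q, hq, hd, h⟩⟩

end Graphs

end EdgeOrientation

open EdgeOrientation

/-- for a length function `w` on the edges, the number of orientations of
`G` containing a directed path from `s` to `t` of total length at most `d` equals the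
number of edge subsets `X` such that `G_X` contains a path from `s` to `t` of total
length at most `d`. -/
theorem distance_orientations_eq_subgraphs {V : Type*} [Fintype V] (G : SimpleGraph V)
    (ρ : Sym2 V → V × V) (hρ : ∀ e ∈ G.edgeSet, Sym2.mk.uncurry (ρ e) = e)
    (w : Sym2 V → NNReal) (s t : V) (d : ℝ) :
    {f : G.edgeSet → Bool | ∃ p : List V, IsDiPath (arcs G ρ f) s t p ∧
        ((diArcsOf s p).map fun a => (w (Sym2.mk.uncurry a) : ℝ)).sum ≤ d}.ncard =
    {X : Set G.edgeSet | ∃ q : (subgraphOf G X).Walk s t, q.IsPath ∧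
        (q.edges.map fun e => (w e : ℝ)).sum ≤ d}.ncard := by
  classical
  rw [← ncard_boolFun_eq_ncard_set (ι := G.edgeSet)]
  simp only [exists_isDiPath_iff_reachableWithin, exists_isPath_iff_reachableWithin hρ]
  rcases le_or_gt 0 d with hd | hd
  · simp only [hd, true_and]
    exact ncard_reachableWithin_orientArcs_eq _ _ _ t Finset.univ _
  · simp [hd.not_ge]
end

section
/- Let G be a finite simple undirected graph with edge set E, let s be a vertex of G and W a set of vertices of G. Then the number of orientations d of G such that in the digraph G⃗^d every vertex w ∈ W is reachable from s by a directed path equals the number of edge subsets X ⊆ E such that all vertices of W ∪ {s} lie in a single connected component of G_X. -/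
/-!
Deletion–contraction on the edges leaving a growing root set `S` (initially `{s}`). Let `e = ab`
with `a ∈ S`. Exactly one of the two orientations of `e` (`a → b`), resp. exactly one of the two
choices `e ∈ X` / `e ∉ X` (namely `e ∈ X`), lets one contract `b` into `S`; the other choice is
equivalent to deleting `e`. Since the reduced problems no longer see the choice at `e`, both counts
`N(S, F)` over the edge set `F` satisfy `2 N(S, F) = N(S ∪ {b}, F - e) + N(S, F - e)`. When no edge
of `F` meets `S`, the vertices reachable from `S` are those of `S`, so both counts are `2 ^ |E|`
or `0` according as `W ⊆ S` or not.
-/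

open Relation Function

theorem Set.boolIndicator_injective {α : Type*} :
    Injective (Set.boolIndicator : Set α → α → Bool) :=
  fun X Y h => Set.ext fun x => by rw [Set.mem_iff_boolIndicator, Set.mem_iff_boolIndicator, h]

theorem Set.boolIndicator_surjective {α : Type*} :
    Surjective (Set.boolIndicator : Set α → α → Bool) :=
  fun f =>
    ⟨{x | f x = true}, funext fun x => Bool.eq_iff_iff.2 (Set.mem_iff_boolIndicator _ x).symm⟩

namespace RootedOrientation

variable {V I : Type*}

def reachableFrom (R : V → V → Prop) (S : Set V) : Set V :=
  {w | ∃ a ∈ S, ReflTransGen R a w}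

theorem subset_reachableFrom (R : V → V → Prop) (S : Set V) : S ⊆ reachableFrom R S :=
  fun a ha => ⟨a, ha, .refl⟩

@[simp]
theorem mem_reachableFrom_singleton {R : V → V → Prop} {s w : V} :
    w ∈ reachableFrom R {s} ↔ ReflTransGen R s w := by
  simp [reachableFrom]

theorem reachableFrom_sup_eq {R B : V → V → Prop} {S T : Set V}
    (hB : ∀ u v, B u v → v ∈ T) (hT : T ⊆ reachableFrom (R ⊔ B) S) :
    reachableFrom (R ⊔ B) S = reachableFrom R (S ∪ T) := by
  ext w
  constructor
  · rintro ⟨a, ha, haw⟩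
    induction haw with
    | refl => exact ⟨a, .inl ha, .refl⟩
    | tail _ hvw ih =>
      rcases hvw with hvw | hvw
      · obtain ⟨x, hx, hxv⟩ := ih
        exact ⟨x, hx, hxv.tail hvw⟩
      · exact ⟨_, .inr (hB _ _ hvw), .refl⟩
  · have hmono : ReflTransGen R ≤ ReflTransGen (R ⊔ B) := ReflTransGen.mono le_sup_left
    rintro ⟨a, ha | ha, haw⟩
    · exact ⟨a, ha, hmono _ _ haw⟩
    · obtain ⟨x, hx, hxa⟩ := hT ha
      exact ⟨x, hx, hxa.trans (hmono _ _ haw)⟩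

theorem reachableFrom_eq_self {R : V → V → Prop} {S : Set V} (h : ∀ u v, R u v → u ∉ S) :
    reachableFrom R S = S := by
  refine Set.Subset.antisymm ?_ (subset_reachableFrom R S)
  rintro w ⟨a, ha, haw⟩
  rcases haw.cases_head with rfl | ⟨b, hab, -⟩
  · exact ha
  · exact absurd ha (h a b hab)

/-- A gadget `A` assigns to each edge `i` and each choice `c : Bool` the arcs `A i c`. -/
def gadgetRel (A : I → Bool → V → V → Prop) (F : Set I) (f : I → Bool) : V → V → Prop :=
  fun u v => ∃ i ∈ F, A i (f i) u v

theorem gadgetRel_eq_sup_diff (A : I → Bool → V → V → Prop) {F : Set I} {i : I} (hi : i ∈ F)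
    (f : I → Bool) : gadgetRel A F f = gadgetRel A (F \ {i}) f ⊔ A i (f i) := by
  ext u v
  simp only [gadgetRel, Set.mem_sdiff, Set.mem_singleton_iff, Pi.sup_apply, sup_Prop_eq]
  constructor
  · rintro ⟨j, hj, hA⟩
    by_cases hji : j = i
    · exact .inr (hji ▸ hA)
    · exact .inl ⟨j, ⟨hj, hji⟩, hA⟩
  · rintro (⟨j, ⟨hj, -⟩, hA⟩ | hA)
    exacts [⟨j, hj, hA⟩, ⟨i, hi, hA⟩]

theorem gadgetRel_diff_update [DecidableEq I] (A : I → Bool → V → V → Prop) (F : Set I)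
    (i : I) (f : I → Bool) (c : Bool) :
    gadgetRel A (F \ {i}) (update f i c) = gadgetRel A (F \ {i}) f := by
  ext u v
  refine exists_congr fun j => and_congr_right fun hj => ?_
  rw [update_of_ne hj.2]

/-- When `a` is a root, the choice `c` of `exists_choice` lets `b` be contracted into the roots,
while the other choice acts as deleting the edge. -/
structure IsEdgeGadget (edge : I → Sym2 V) (A : I → Bool → V → V → Prop) : Prop where
  edge_eq : ∀ i c u v, A i c u v → s(u, v) = edge i
  exists_choice : ∀ i a b, s(a, b) = edge i → ∃ c, A i c a b ∧ ∀ u v, A i (!c) u v → v = a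

theorem ncard_inter_eq_ncard_sdiff [DecidableEq I] {Q : Set (I → Bool)} (i : I) (c : Bool)
    (hQ : ∀ f b, update f i b ∈ Q ↔ f ∈ Q) :
    (Q ∩ {f | f i = c}).ncard = (Q \ {f | f i = c}).ncard := by
  set flip : (I → Bool) → (I → Bool) := fun f => update f i (!f i)
  have hflip : Involutive flip := fun f => by simp [flip]
  have himage : flip '' (Q ∩ {f | f i = c}) = Q \ {f | f i = c} := by
    ext f
    simp [hflip.image_eq_preimage_symm, flip, hQ, Bool.eq_not_iff]
  rw [← himage, Set.ncard_image_of_injective _ hflip.injective]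

theorem two_mul_ncard_eq_of_forall_mem_iff [Finite I] [DecidableEq I] {P Q R : Set (I → Bool)}
    (i : I) (c : Bool) (hQ : ∀ f b, update f i b ∈ Q ↔ f ∈ Q)
    (hR : ∀ f b, update f i b ∈ R ↔ f ∈ R) (hP : ∀ f, f ∈ P ↔ if f i = c then f ∈ Q else f ∈ R) :
    2 * P.ncard = Q.ncard + R.ncard := by
  set T : Set (I → Bool) := {f | f i = c}
  have hPQ : P ∩ T = Q ∩ T := by
    ext f
    simp +contextual [T, hP]
  have hPR : P \ T = R \ T := by
    ext f
    simp +contextual [T, hP]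
  rw [← Set.ncard_inter_add_ncard_sdiff_eq_ncard P T,
    ← Set.ncard_inter_add_ncard_sdiff_eq_ncard Q T, ← Set.ncard_inter_add_ncard_sdiff_eq_ncard R T,
    hPQ, hPR, ncard_inter_eq_ncard_sdiff i c hQ, ncard_inter_eq_ncard_sdiff i c hR]
  ring

namespace IsEdgeGadget

variable {edge : I → Sym2 V} {A : I → Bool → V → V → Prop}

theorem two_mul_ncard_eq [Finite I] (hA : IsEdgeGadget edge A) (W : Set V) {F : Set I}
    {S : Set V} {i : I} {a b : V} (hi : i ∈ F) (ha : a ∈ S) (hab : s(a, b) = edge i) :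
    2 * {f | W ⊆ reachableFrom (gadgetRel A F f) S}.ncard =
      {f | W ⊆ reachableFrom (gadgetRel A (F \ {i}) f) (insert b S)}.ncard +
        {f | W ⊆ reachableFrom (gadgetRel A (F \ {i}) f) S}.ncard := by
  classical
  obtain ⟨c, hcab, hnot⟩ := hA.exists_choice i a b hab
  refine two_mul_ncard_eq_of_forall_mem_iff i c (by simp [gadgetRel_diff_update])
    (by simp [gadgetRel_diff_update]) fun f => ?_
  simp only [Set.mem_ofPred_eq, gadgetRel_eq_sup_diff A hi f]
  split_ifs with hfi
  · have hends : ∀ u v, A i c u v → v ∈ ({a, b} : Set V) := fun u v huv => by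
      have hv : v ∈ s(a, b) := hab ▸ hA.edge_eq i c u v huv ▸ Sym2.mem_mk_right u v
      simpa using hv
    have hreach : {a, b} ⊆ reachableFrom (gadgetRel A (F \ {i}) f ⊔ A i c) S := by
      rintro x (rfl | rfl)
      exacts [subset_reachableFrom _ _ ha, ⟨a, ha, .single (.inr hcab)⟩]
    rw [hfi, reachableFrom_sup_eq hends hreach, Set.union_insert, Set.union_singleton,
      Set.insert_eq_of_mem (Set.mem_insert_of_mem b ha)]
  · have hends : ∀ u v, A i (f i) u v → v ∈ ({a} : Set V) := by
      simpa [Bool.eq_not_iff.2 hfi] using hnot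
    rw [reachableFrom_sup_eq hends (by simpa using subset_reachableFrom _ _ ha),
      Set.union_singleton, Set.insert_eq_of_mem ha]

theorem ncard_eq [Finite I] {B : I → Bool → V → V → Prop} (hA : IsEdgeGadget edge A)
    (hB : IsEdgeGadget edge B) (W : Set V) (F : Set I) (S : Set V) :
    {f | W ⊆ reachableFrom (gadgetRel A F f) S}.ncard =
      {f | W ⊆ reachableFrom (gadgetRel B F f) S}.ncard := by
  induction F using WellFoundedLT.induction generalizing S with
  | _ F ih =>
  by_cases hmeet : ∃ i ∈ F, ∃ a ∈ S, ∃ b, s(a, b) = edge i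
  · obtain ⟨i, hi, a, ha, b, hab⟩ := hmeet
    have hA' := hA.two_mul_ncard_eq W hi ha hab
    have hB' := hB.two_mul_ncard_eq W hi ha hab
    have ih₁ := ih _ (Set.sdiff_singleton_ssubset.2 hi) (insert b S)
    have ih₂ := ih _ (Set.sdiff_singleton_ssubset.2 hi) S
    omega
  · push Not at hmeet
    have hout : ∀ {C : I → Bool → V → V → Prop}, IsEdgeGadget edge C →
        ∀ f, reachableFrom (gadgetRel C F f) S = S := fun hC f =>
      reachableFrom_eq_self fun u v ⟨i, hi, huv⟩ hu => hmeet i hi u hu v (hC.edge_eq _ _ _ _ huv)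
    simp only [hout hA, hout hB]

end IsEdgeGadget

def orientGadget (ends : I → V × V) (i : I) (c : Bool) (u v : V) : Prop :=
  (c = false ∧ ends i = (u, v)) ∨ (c = true ∧ ends i = (v, u))

theorem isEdgeGadget_orientGadget (ends : I → V × V) :
    IsEdgeGadget (fun i => s((ends i).1, (ends i).2)) (orientGadget ends) where
  edge_eq i c u v h := by
    rcases h with ⟨-, h⟩ | ⟨-, h⟩ <;> simp [h, Sym2.eq_swap]
  exists_choice i a b hab := by
    rcases Sym2.eq_iff.1 hab with ⟨ha, hb⟩ | ⟨ha, hb⟩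
    · refine ⟨false, .inl ⟨rfl, by rw [ha, hb]⟩, ?_⟩
      rintro u v (⟨⟨⟩, -⟩ | ⟨-, h⟩)
      rw [ha, h]
    · refine ⟨true, .inr ⟨rfl, by rw [ha, hb]⟩, ?_⟩
      rintro u v (⟨-, h⟩ | ⟨⟨⟩, -⟩)
      rw [ha, h]

/-- An edge subset, encoded by its indicator; a kept edge gives arcs in both directions. -/
def subsetGadget (edge : I → Sym2 V) (i : I) (c : Bool) (u v : V) : Prop :=
  c = true ∧ s(u, v) = edge i

theorem isEdgeGadget_subsetGadget (edge : I → Sym2 V) :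
    IsEdgeGadget edge (subsetGadget edge) where
  edge_eq _ _ _ _ h := h.2
  exists_choice _ _ _ hab := ⟨true, ⟨rfl, hab⟩, by simp [subsetGadget]⟩

theorem forall_reachable_iff_subset_reachableFrom (G : SimpleGraph V) (s : V) (W : Set V) :
    (∀ u ∈ W ∪ {s}, ∀ v ∈ W ∪ {s}, G.Reachable u v) ↔ W ⊆ reachableFrom G.Adj {s} := by
  simp only [Set.subset_def, mem_reachableFrom_singleton, ← SimpleGraph.reachable_iff_reflTransGen]
  refine ⟨fun h w hw => h s (.inr rfl) w (.inl hw), fun h u hu v hv => ?_⟩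
  have hs : ∀ x ∈ W ∪ {s}, G.Reachable s x := by
    rintro x (hx | rfl)
    exacts [h x hx, .refl _]
  exact (hs u hu).symm.trans (hs v hv)

theorem arcs_eq_gadgetRel (G : SimpleGraph V) (ρ : Sym2 V → V × V) (d : G.edgeSet → Bool) :
    arcs G ρ d = gadgetRel (orientGadget fun i : G.edgeSet => ρ i) Set.univ d :=
  rfl

theorem subgraphOf_adj_eq (G : SimpleGraph V) (X : Set G.edgeSet) :
    (subgraphOf G X).Adj = gadgetRel (subsetGadget Subtype.val) Set.univ X.boolIndicator := by
  ext u v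
  simp only [subgraphOf, SimpleGraph.fromEdgeSet_adj, gadgetRel, subsetGadget, Set.mem_univ,
    true_and, ← Set.mem_iff_boolIndicator]
  constructor
  · rintro ⟨⟨i, hi, hiuv⟩, -⟩
    exact ⟨i, hi, hiuv.symm⟩
  · rintro ⟨i, hi, hiuv⟩
    exact ⟨⟨i, hi, hiuv.symm⟩, G.ne_of_adj (G.mem_edgeSet.1 (hiuv ▸ i.2))⟩

end RootedOrientation

open RootedOrientation

/-- the number of orientations of `G` in which every vertex of `W` is
reachable from `s` by a directed path equals the number of edge subsets `X` such that
all vertices of `W ∪ {s}` lie in a single connected component of `G_X`. -/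
theorem rooted_orientations_eq_connected_subgraphs {V : Type*} [Fintype V]
    (G : SimpleGraph V) (ρ : Sym2 V → V × V)
    (hρ : ∀ e ∈ G.edgeSet, Sym2.mk.uncurry (ρ e) = e) (s : V) (W : Set V) :
    {d : G.edgeSet → Bool | ∀ w ∈ W, Relation.ReflTransGen (arcs G ρ d) s w}.ncard =
    {X : Set G.edgeSet | ∀ u ∈ W ∪ {s}, ∀ v ∈ W ∪ {s},
        (subgraphOf G X).Reachable u v}.ncard := by
  have hedge : (fun i : G.edgeSet => s((ρ i).1, (ρ i).2)) = Subtype.val := funext fun i => hρ i i.2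
  have hcount := (hedge ▸ isEdgeGadget_orientGadget fun i : G.edgeSet => ρ i).ncard_eq
    (isEdgeGadget_subsetGadget Subtype.val) W Set.univ {s}
  have hsubsets :
      {X : Set G.edgeSet | ∀ u ∈ W ∪ {s}, ∀ v ∈ W ∪ {s}, (subgraphOf G X).Reachable u v} =
        Set.boolIndicator ⁻¹'
          {f | W ⊆ reachableFrom (gadgetRel (subsetGadget Subtype.val) Set.univ f) {s}} := by
    ext X
    rw [Set.mem_ofPred_eq, forall_reachable_iff_subset_reachableFrom, subgraphOf_adj_eq]
    rfl
  rw [hsubsets, Set.ncard_preimage_of_injective_subset_range Set.boolIndicator_injective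
    fun f _ => Set.boolIndicator_surjective f, ← hcount]
  simp only [arcs_eq_gadgetRel, Set.subset_def, mem_reachableFrom_singleton]
end
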